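/- arXiv:2509.12848 — 5 statements merged into one kernel-verified Lean document; each statement's English description precedes it below -/
import Mathlib

section
/- Key lemma, nondegenerate branches: assume the steady assumptions and let u ∈ USC(Γ) be a viscosity subsolution and v ∈ LSC(Γ) a viscosity supersolution of problem (P) such that max_Γ (u − v) = (u − v)(O). Set p̲_i = liminf_{t→0⁺}(u_i(t)−u_i(0))/t, p̄_i = limsup_{t→0⁺}(u_i(t)−u_i(0))/t, q̲_i = liminf_{t→0⁺}(v_i(t)−v_i(0))/t and q̄_i = limsup_{t→0⁺}(v_i(t)−v_i(0))/t. Then for every index i with a_i(O) > 0 (i.e. i ∉ 𝒟), one has p̲_i = p̄_i and q̲_i = q̄_i. -/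
/-
Suppose the difference quotients of `u_i` at `0⁺` oscillate: `liminf < p < q < limsup`. Let `φ` be
the line `u(O) + β s`, `β = (p + q) / 2`, bent down by a nonnegative `o(s)` term. Then `u_i − φ`
is negative at small `T` with quotient `< p` and positive at some `s < T` with quotient `> q`, so
it attains its maximum over `[0, T]` at an interior point, arbitrarily close to `O`. Bending by the
barrier `b / c² (e^{cs} − 1 − cs)`, the diffusion term `a_i b e^{cs}` at such a point outweighs
`λ u` and the Hamiltonian (which decreases at most like `C |p|`) once `b` is large, contradicting
the subsolution inequality. For `v`, apply this to `−v_i`.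
-/

open Set Filter Topology

namespace Paper

/-- Data of the junction problem (P): a junction with `N` edges of lengths `ℓ i`,
glued at the junction point `O` (parameter `0` of each edge), with a (possibly
degenerate) diffusion `a i`, Hamiltonians `H i`, a Kirchhoff nonlinearity `F`,
Dirichlet data `h i` and a constant `lam > 0`.  Functions on the junction `Γ`
are represented edge-wise: `u : Fin N → ℝ → ℝ`, where only the values of
`u i` on `[0, ℓ i]` are relevant and `u i 0` represents the value at `O`. -/
structure Data (N : ℕ) where
  ℓ : Fin N → ℝ
  ℓ_pos : ∀ i, 0 < ℓ i
  lam : ℝ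
  lam_pos : 0 < lam
  a : Fin N → ℝ → ℝ
  a_nonneg : ∀ i, ∀ t ∈ Set.Icc (0:ℝ) (ℓ i), 0 ≤ a i t
  a_cont : ∀ i, ContinuousOn (a i) (Set.Icc 0 (ℓ i))
  H : Fin N → ℝ → ℝ → ℝ
  H_cont : ∀ i, ContinuousOn (fun q : ℝ × ℝ => H i q.1 q.2)
      ((Set.Icc 0 (ℓ i)) ×ˢ (Set.univ : Set ℝ))
  F : ℝ → (Fin N → ℝ) → ℝ
  F_cont : Continuous (fun q : ℝ × (Fin N → ℝ) => F q.1 q.2)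
  h : Fin N → ℝ

variable {N : ℕ}

/-- A family of edge functions defines a function on `Γ`: values at `O` agree. -/
def Glued (u : Fin N → ℝ → ℝ) : Prop := ∀ i j : Fin N, u i 0 = u j 0

/-- `u ∈ USC(Γ)`. -/
def IsUSC (D : Data N) (u : Fin N → ℝ → ℝ) : Prop :=
  ∀ i, UpperSemicontinuousOn (u i) (Set.Icc 0 (D.ℓ i))

/-- `u ∈ LSC(Γ)`. -/
def IsLSC (D : Data N) (u : Fin N → ℝ → ℝ) : Prop :=
  ∀ i, LowerSemicontinuousOn (u i) (Set.Icc 0 (D.ℓ i))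

/-- Test functions in `C²(Γ)` (edge-wise C², glued at `O`). -/
def IsTest (φ : Fin N → ℝ → ℝ) : Prop :=
  Glued φ ∧ ∀ i, ContDiff ℝ 2 (φ i)

/-- `G_i(r,p,X,x) = λ r − a_i(x) X + H_i(x,p)`. -/
def G (D : Data N) (i : Fin N) (r p X t : ℝ) : ℝ :=
  D.lam * r - D.a i t * X + D.H i t p

/-- Local maximum point of an edge-wise function at an interior edge point. -/
def LocalMaxEdge (D : Data N) (w : Fin N → ℝ → ℝ) (i : Fin N) (t : ℝ) : Prop :=
  ∃ δ > 0, ∀ s ∈ Set.Icc (0:ℝ) (D.ℓ i), |s - t| < δ → w i s ≤ w i t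

def LocalMinEdge (D : Data N) (w : Fin N → ℝ → ℝ) (i : Fin N) (t : ℝ) : Prop :=
  ∃ δ > 0, ∀ s ∈ Set.Icc (0:ℝ) (D.ℓ i), |s - t| < δ → w i t ≤ w i s

/-- Local maximum point at the junction point `O`. -/
def LocalMaxO (D : Data N) (w : Fin N → ℝ → ℝ) : Prop :=
  ∃ δ > 0, ∀ j, ∀ s ∈ Set.Icc (0:ℝ) (D.ℓ j), s < δ → w j s ≤ w j 0

def LocalMinO (D : Data N) (w : Fin N → ℝ → ℝ) : Prop :=
  ∃ δ > 0, ∀ j, ∀ s ∈ Set.Icc (0:ℝ) (D.ℓ j), s < δ → w j 0 ≤ w j s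

/-- Local maximum point at the boundary vertex `v_i` (parameter `ℓ i`). -/
def LocalMaxVert (D : Data N) (w : Fin N → ℝ → ℝ) (i : Fin N) : Prop :=
  ∃ δ > 0, ∀ s ∈ Set.Icc (0:ℝ) (D.ℓ i), D.ℓ i - s < δ → w i s ≤ w i (D.ℓ i)

def LocalMinVert (D : Data N) (w : Fin N → ℝ → ℝ) (i : Fin N) : Prop :=
  ∃ δ > 0, ∀ s ∈ Set.Icc (0:ℝ) (D.ℓ i), D.ℓ i - s < δ → w i (D.ℓ i) ≤ w i s

/-- Viscosity subsolution of problem (P), junction viscosity sense. -/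
def IsSubsol (D : Data N) (u : Fin N → ℝ → ℝ) : Prop :=
  IsUSC D u ∧ Glued u ∧
  ∀ φ : Fin N → ℝ → ℝ, IsTest φ →
    ((∀ i, ∀ t ∈ Set.Ioo (0:ℝ) (D.ℓ i),
        LocalMaxEdge D (fun j s => u j s - φ j s) i t →
        G D i (u i t) (deriv (φ i) t) (deriv (deriv (φ i)) t) t ≤ 0) ∧
     (LocalMaxO D (fun j s => u j s - φ j s) →
        (∃ i, G D i (u i 0) (deriv (φ i) 0) (deriv (deriv (φ i)) 0) 0 ≤ 0) ∨
        (∀ i, D.F (u i 0) (fun j => deriv (φ j) 0) ≤ 0)) ∧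
     (∀ i, LocalMaxVert D (fun j s => u j s - φ j s) i →
        G D i (u i (D.ℓ i)) (deriv (φ i) (D.ℓ i)) (deriv (deriv (φ i)) (D.ℓ i)) (D.ℓ i) ≤ 0 ∨
        u i (D.ℓ i) ≤ D.h i))

/-- Viscosity supersolution of problem (P), junction viscosity sense. -/
def IsSupersol (D : Data N) (v : Fin N → ℝ → ℝ) : Prop :=
  IsLSC D v ∧ Glued v ∧
  ∀ φ : Fin N → ℝ → ℝ, IsTest φ →
    ((∀ i, ∀ t ∈ Set.Ioo (0:ℝ) (D.ℓ i),
        LocalMinEdge D (fun j s => v j s - φ j s) i t →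
        0 ≤ G D i (v i t) (deriv (φ i) t) (deriv (deriv (φ i)) t) t) ∧
     (LocalMinO D (fun j s => v j s - φ j s) →
        (∃ i, 0 ≤ G D i (v i 0) (deriv (φ i) 0) (deriv (deriv (φ i)) 0) 0) ∨
        (∀ i, 0 ≤ D.F (v i 0) (fun j => deriv (φ j) 0))) ∧
     (∀ i, LocalMinVert D (fun j s => v j s - φ j s) i →
        0 ≤ G D i (v i (D.ℓ i)) (deriv (φ i) (D.ℓ i)) (deriv (deriv (φ i)) (D.ℓ i)) (D.ℓ i) ∨
        D.h i ≤ v i (D.ℓ i)))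

/-- Assumption (Ham) for the Hamiltonian `H i`, with constant `C`. -/
def Ham (D : Data N) (C : ℝ) (i : Fin N) : Prop :=
  (∀ t ∈ Set.Icc (0:ℝ) (D.ℓ i), ∀ s ∈ Set.Icc (0:ℝ) (D.ℓ i), ∀ p : ℝ,
      |D.H i t p - D.H i s p| ≤ C * (1 + |p|) * |t - s|) ∧
  (∀ t ∈ Set.Icc (0:ℝ) (D.ℓ i), ∀ p q : ℝ, |D.H i t p - D.H i t q| ≤ C * |p - q|)

/-- Assumption (Hcoercive) for `H i` on the set `S`, with constant `C`. -/
def Coercive (D : Data N) (C : ℝ) (i : Fin N) (S : Set ℝ) : Prop :=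
  ∀ t ∈ S, ∀ p : ℝ, C⁻¹ * |p| - C ≤ D.H i t p

/-- Assumption (hyp-diff) for the diffusion `a i`. -/
def HypDiff (D : Data N) (i : Fin N) : Prop :=
  ∃ σ : ℝ → ℝ, (∃ C : NNReal, LipschitzOnWith C σ (Set.Icc 0 (D.ℓ i))) ∧
    ∀ t ∈ Set.Icc (0:ℝ) (D.ℓ i), D.a i t = (σ t) ^ 2

/-- Assumption (hyp-kirch) for the Kirchhoff nonlinearity `F`. -/
def Kirchhoff (D : Data N) : Prop :=
  (∀ (r s : ℝ) (p q : Fin N → ℝ), s ≤ r → (∀ i, p i ≤ q i) → D.F s q ≤ D.F r p) ∧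
  (∀ (r s : ℝ) (p q : Fin N → ℝ), s ≤ r → (∀ i, p i ≤ q i) → (∃ j, p j < q j) →
      D.F s q < D.F r p) ∧
  (∀ (i : Fin N) (r : ℝ) (p : Fin N → ℝ),
      Filter.Tendsto (fun z : ℝ => D.F r (Function.update p i z))
        Filter.atBot Filter.atTop)

/-- The steady assumptions (2.9). -/
def Steady (D : Data N) (C : ℝ) : Prop :=
  0 < C ∧ (∀ i, Ham D C i) ∧ (∀ i, HypDiff D i) ∧
  (∀ i, D.a i 0 = 0 → Coercive D C i (Set.Icc 0 (D.ℓ i))) ∧ Kirchhoff D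

/-- Assumption (hyp-dir). -/
def HypDir (D : Data N) (C : ℝ) : Prop :=
  ∀ i, 0 < D.a i (D.ℓ i) ∨
    ∃ δ > 0, Coercive D C i (Set.Icc (D.ℓ i - δ) (D.ℓ i))


/-- One-dimensional (first-order) superdifferential at `0⁺` of `w : [0,∞) → ℝ`:
`p ∈ D⁺w(0)` iff `w(t) ≤ w(0) + p t + o(t)` as `t → 0⁺`. -/
def D1plus (w : ℝ → ℝ) : Set ℝ :=
  {p | ∀ ε > 0, ∀ᶠ t in 𝓝[>] (0:ℝ), w t ≤ w 0 + p * t + ε * t}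

/-- One-dimensional (first-order) subdifferential at `0⁺`:
`q ∈ D⁻w(0)` iff `w(t) ≥ w(0) + q t + o(t)` as `t → 0⁺`. -/
def D1minus (w : ℝ → ℝ) : Set ℝ :=
  {q | ∀ ε > 0, ∀ᶠ t in 𝓝[>] (0:ℝ), w 0 + q * t - ε * t ≤ w t}

/-- `limsup_{t→0⁺} (w(t) − w(0))/t`, as an extended real. -/
noncomputable def diffQuotLimsup (w : ℝ → ℝ) : EReal :=
  Filter.limsup (fun t : ℝ => (((w t - w 0) / t : ℝ) : EReal)) (𝓝[>] (0:ℝ))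

/-- `liminf_{t→0⁺} (w(t) − w(0))/t`, as an extended real. -/
noncomputable def diffQuotLiminf (w : ℝ → ℝ) : EReal :=
  Filter.liminf (fun t : ℝ => (((w t - w 0) / t : ℝ) : EReal)) (𝓝[>] (0:ℝ))

lemma diffQuotLiminf_neg (w : ℝ → ℝ) : diffQuotLiminf (-w) = -diffQuotLimsup w := by
  rw [diffQuotLiminf, diffQuotLimsup, ← EReal.liminf_neg]
  congr 1
  funext t
  simp only [Pi.neg_apply, ← EReal.coe_neg]
  congr 1
  ring

lemma diffQuotLimsup_neg (w : ℝ → ℝ) : diffQuotLimsup (-w) = -diffQuotLiminf w := by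
  simpa using (congrArg Neg.neg (diffQuotLiminf_neg (-w))).symm

noncomputable def expBarrier (b c s : ℝ) : ℝ :=
  b / c ^ 2 * (Real.exp (c * s) - 1 - c * s)

lemma hasDerivAt_expBarrier (b : ℝ) {c : ℝ} (hc : c ≠ 0) (s : ℝ) :
    HasDerivAt (expBarrier b c) (b / c * (Real.exp (c * s) - 1)) s := by
  have hlin : HasDerivAt (fun s => c * s) c s := by
    simpa using (hasDerivAt_id s).const_mul c
  refine (((hlin.exp.sub_const 1).sub hlin).const_mul (b / c ^ 2)).congr_deriv ?_
  field_simp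

lemma hasDerivAt_deriv_expBarrier (b : ℝ) {c : ℝ} (hc : c ≠ 0) (s : ℝ) :
    HasDerivAt (deriv (expBarrier b c)) (b * Real.exp (c * s)) s := by
  have hlin : HasDerivAt (fun s => c * s) c s := by
    simpa using (hasDerivAt_id s).const_mul c
  rw [funext fun s => (hasDerivAt_expBarrier b hc s).deriv]
  refine ((hlin.exp.sub_const 1).const_mul (b / c)).congr_deriv ?_
  field_simp

lemma contDiff_expBarrier (b c : ℝ) : ContDiff ℝ 2 (expBarrier b c) := by
  unfold expBarrier
  fun_prop

lemma expBarrier_nonneg {b : ℝ} (hb : 0 ≤ b) (c s : ℝ) : 0 ≤ expBarrier b c s :=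
  mul_nonneg (by positivity) (by linarith [Real.add_one_le_exp (c * s)])

lemma expBarrier_zero (b c : ℝ) : expBarrier b c 0 = 0 := by
  simp [expBarrier]

lemma expBarrier_isLittleO (b : ℝ) {c : ℝ} (hc : c ≠ 0) :
    expBarrier b c =o[𝓝 0] id := by
  have h := (hasDerivAt_expBarrier b hc 0).isLittleO
  simp only [expBarrier_zero, sub_zero, smul_eq_mul, mul_zero, Real.exp_zero, sub_self] at h
  exact h

lemma UpperSemicontinuousOn.exists_isLocalMax_Ioo {g : ℝ → ℝ} {a b c : ℝ}
    (hg : UpperSemicontinuousOn g (Icc a b)) (hc : c ∈ Icc a b) (hac : g a < g c)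
    (hbc : g b < g c) : ∃ t ∈ Ioo a b, IsLocalMax g t ∧ g a ≤ g t := by
  obtain ⟨t, ht, hmax⟩ := hg.exists_isMaxOn ⟨c, hc⟩ isCompact_Icc
  have hta : t ≠ a := by rintro rfl; exact (hmax hc).not_gt hac
  have htb : t ≠ b := by rintro rfl; exact (hmax hc).not_gt hbc
  have ht' : t ∈ Ioo a b := ⟨lt_of_le_of_ne ht.1 hta.symm, lt_of_le_of_ne ht.2 htb⟩
  exact ⟨t, ht', hmax.isLocalMax (Icc_mem_nhds ht'.1 ht'.2),
    hmax ⟨le_rfl, hc.1.trans hc.2⟩⟩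

lemma frequently_sub_lt_mul_of_diffQuotLiminf_lt {w : ℝ → ℝ} {p : ℝ}
    (h : diffQuotLiminf w < p) : ∃ᶠ t in 𝓝[>] 0, w t - w 0 < p * t := by
  refine (frequently_lt_of_liminf_lt (h := h)).mp ?_
  filter_upwards [self_mem_nhdsWithin] with t (ht : 0 < t) hlt
  exact (div_lt_iff₀ ht).1 (EReal.coe_lt_coe_iff.1 hlt)

lemma frequently_mul_lt_sub_of_lt_diffQuotLimsup {w : ℝ → ℝ} {q : ℝ}
    (h : q < diffQuotLimsup w) : ∃ᶠ t in 𝓝[>] 0, q * t < w t - w 0 := by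
  refine (frequently_lt_of_lt_limsup (h := h)).mp ?_
  filter_upwards [self_mem_nhdsWithin] with t (ht : 0 < t) hlt
  exact (lt_div_iff₀ ht).1 (EReal.coe_lt_coe_iff.1 hlt)

theorem exists_slope_frequently_isLocalMax {w : ℝ → ℝ} {δ : ℝ} (hδ : 0 < δ)
    (hw : UpperSemicontinuousOn w (Icc 0 δ)) (h : diffQuotLiminf w < diffQuotLimsup w) :
    ∃ β : ℝ, ∀ ψ : ℝ → ℝ, Continuous ψ → (∀ s, 0 ≤ ψ s) → ψ =o[𝓝 0] id →
      ∃ᶠ t in 𝓝[>] 0, IsLocalMax (fun s => w s - (w 0 + β * s - ψ s)) t ∧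
        w 0 + β * t - ψ t ≤ w t := by
  obtain ⟨p, hp, hpq⟩ := EReal.exists_between_coe_real h
  obtain ⟨q, hpq, hq⟩ := EReal.exists_between_coe_real hpq
  have hpq : p < q := EReal.coe_lt_coe_iff.1 hpq
  refine ⟨(p + q) / 2, fun ψ hψc hψnn hψo => ?_⟩
  have hψ0 : ψ 0 = 0 := by simpa using (hψo.bound one_pos).self_of_nhds
  have hψsmall : ∀ᶠ T in 𝓝[>] 0, ψ T ≤ (q - p) / 2 * T := by
    filter_upwards [(hψo.bound (half_pos (sub_pos.2 hpq))).filter_mono nhdsWithin_le_nhds,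
      self_mem_nhdsWithin] with T hT (hT0 : 0 < T)
    rw [Real.norm_eq_abs, id, Real.norm_eq_abs, abs_of_pos hT0] at hT
    exact (le_abs_self _).trans hT
  rw [Filter.frequently_iff]
  intro U hU
  obtain ⟨ε, hε, hεU⟩ := mem_nhdsGT_iff_exists_Ioo_subset.1 hU
  obtain ⟨T, hTlow, hTψ, hT⟩ := ((frequently_sub_lt_mul_of_diffQuotLiminf_lt hp).and_eventually
    (hψsmall.and (Ioo_mem_nhdsGT (lt_min hε hδ)))).exists
  obtain ⟨s, hshigh, hs⟩ := ((frequently_mul_lt_sub_of_lt_diffQuotLimsup hq).and_eventually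
    (Ioo_mem_nhdsGT hT.1)).exists
  have hgc : UpperSemicontinuousOn (fun s => w s - (w 0 + (p + q) / 2 * s - ψ s)) (Icc 0 T) := by
    simpa only [sub_eq_add_neg] using
      (hw.mono (Icc_subset_Icc_right (hT.2.trans_le (min_le_right _ _)).le)).add
        ((by fun_prop : Continuous fun s => -(w 0 + (p + q) / 2 * s - ψ s)).upperSemicontinuous
          |>.upperSemicontinuousOn _)
  obtain ⟨t, ht, hmax, hle⟩ :=
    UpperSemicontinuousOn.exists_isLocalMax_Ioo hgc (c := s) ⟨hs.1.le, hs.2.le⟩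
    (by linarith [hψnn s, mul_pos (sub_pos.2 hpq) hs.1])
    (by linarith [hψnn s, mul_pos (sub_pos.2 hpq) hs.1, mul_pos (sub_pos.2 hpq) hT.1])
  refine ⟨t, hεU ⟨ht.1, ht.2.trans (hT.2.trans_le (min_le_left _ _))⟩, hmax, ?_⟩
  simp only [hψ0] at hle
  linarith

lemma deriv_const_add_mul_sub (a β : ℝ) {ψ : ℝ → ℝ} (hψ : Differentiable ℝ ψ) :
    deriv (fun s => a + β * s - ψ s) = fun s => β - deriv ψ s := by
  funext s
  exact ((((hasDerivAt_id s).const_mul β).const_add a).sub (hψ s).hasDerivAt).deriv.trans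
    (by simp)

/-- The local maxima are taken in `ℝ`, so this is the usual notion only for open `S`. -/
def IsViscositySubsolutionOn (lam : ℝ) (A : ℝ → ℝ) (H : ℝ → ℝ → ℝ) (w : ℝ → ℝ)
    (S : Set ℝ) : Prop :=
  ∀ φ : ℝ → ℝ, ContDiff ℝ 2 φ → ∀ t ∈ S, IsLocalMax (fun s => w s - φ s) t →
    lam * w t - A t * deriv (deriv φ) t + H t (deriv φ t) ≤ 0

theorem diffQuotLiminf_eq_diffQuotLimsup_of_isViscositySubsolutionOn
    {lam C a₀ B δ : ℝ} {A w : ℝ → ℝ} {H : ℝ → ℝ → ℝ}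
    (hlam : 0 ≤ lam) (hC : 0 < C) (ha₀ : 0 < a₀) (hδ : 0 < δ)
    (hA : ∀ᶠ t in 𝓝[>] 0, a₀ ≤ A t) (hH : ∀ᶠ t in 𝓝[>] 0, ∀ p, -B - C * |p| ≤ H t p)
    (hw : UpperSemicontinuousOn w (Icc 0 δ))
    (hsub : IsViscositySubsolutionOn lam A H w (Ioo 0 δ)) :
    diffQuotLiminf w = diffQuotLimsup w := by
  refine (liminf_le_limsup).eq_of_not_lt fun hlt => ?_
  obtain ⟨β, hβ⟩ := exists_slope_frequently_isLocalMax hδ hw hlt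
  -- with `c = C / a₀` the drift `C |ψ'| = a₀ b (e^{ct} − 1)` is absorbed by `a₀ ψ'' = a₀ b e^{ct}`,
  -- leaving `a₀ b`, which this `b` makes larger than all remaining terms
  set c := C / a₀
  have hc0 : 0 < c := div_pos hC ha₀
  set b := (|B| + C * |β| + lam * |w 0|) / a₀ + 2
  have hb : 0 < b := by positivity
  have hab : a₀ * b = |B| + C * |β| + lam * |w 0| + 2 * a₀ := by
    simp only [b]; field_simp
  have hcb : C * (b / c) = a₀ * b := by
    simp only [c]; field_simp
  set ψ := expBarrier b c
  have hψ2 : ContDiff ℝ 2 ψ := contDiff_expBarrier b c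
  have hsmall : ∀ᶠ t in 𝓝[>] 0, -a₀ < lam * (β * t - ψ t) := by
    have hcont : Continuous fun t => lam * (β * t - ψ t) := by fun_prop
    have h0 : (fun t => lam * (β * t - ψ t)) 0 = 0 := by simp [ψ, expBarrier_zero]
    exact (hcont.tendsto' 0 0 h0).eventually (Ioi_mem_nhds (neg_lt_zero.2 ha₀))
      |>.filter_mono nhdsWithin_le_nhds
  obtain ⟨t, ⟨hmax, htouch⟩, htδ, hAt, hHt, hsmallt⟩ :=
    ((hβ ψ hψ2.continuous (expBarrier_nonneg hb.le c)
      (expBarrier_isLittleO b hc0.ne')).and_eventually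
      ((eventually_mem_set.2 (Ioo_mem_nhdsGT hδ)).and (hA.and (hH.and hsmall)))).exists
  have hvisc := hsub (fun s => w 0 + β * s - ψ s) (by fun_prop) t htδ hmax
  simp only [deriv_const_add_mul_sub (w 0) β (hψ2.differentiable two_ne_zero),
    deriv_const_sub] at hvisc
  rw [(hasDerivAt_deriv_expBarrier b hc0.ne' t).deriv,
    (hasDerivAt_expBarrier b hc0.ne' t).deriv] at hvisc
  set E := Real.exp (c * t)
  have hE : 1 ≤ E := Real.one_le_exp (mul_nonneg hc0.le htδ.1.le)
  have hlamw : -(lam * |w 0|) - a₀ ≤ lam * w t := by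
    linarith [mul_le_mul_of_nonneg_left htouch hlam,
      mul_le_mul_of_nonneg_left (neg_abs_le (w 0)) hlam]
  have hAbE : a₀ * (b * E) ≤ A t * (b * E) :=
    mul_le_mul_of_nonneg_right hAt (by positivity)
  have hHbound : -|B| - C * |β| - a₀ * b * (E - 1) ≤ H t (β - b / c * (E - 1)) := by
    have hslope : |β - b / c * (E - 1)| ≤ |β| + b / c * (E - 1) := by
      refine (abs_sub _ _).trans ?_
      rw [abs_of_nonneg (mul_nonneg (div_pos hb hc0).le (by linarith))]
    have hCslope : C * (b / c * (E - 1)) = a₀ * b * (E - 1) := by rw [← hcb]; ring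
    linarith [hHt (β - b / c * (E - 1)), le_abs_self B, mul_le_mul_of_nonneg_left hslope hC.le]
  linarith

variable {N : ℕ}

lemma localMaxEdge_of_isLocalMax {D : Data N} {w : Fin N → ℝ → ℝ} {i : Fin N} {t : ℝ}
    (h : IsLocalMax (w i) t) : LocalMaxEdge D w i t := by
  obtain ⟨ε, hε, hmax⟩ := Metric.eventually_nhds_iff.1 h
  exact ⟨ε, hε, fun s _ hs => hmax hs⟩

lemma localMinEdge_of_isLocalMin {D : Data N} {w : Fin N → ℝ → ℝ} {i : Fin N} {t : ℝ}
    (h : IsLocalMin (w i) t) : LocalMinEdge D w i t := by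
  obtain ⟨ε, hε, hmin⟩ := Metric.eventually_nhds_iff.1 h
  exact ⟨ε, hε, fun s _ hs => hmin hs⟩

lemma isTest_update_const {φ : ℝ → ℝ} (hφ : ContDiff ℝ 2 φ) (i : Fin N) :
    IsTest (Function.update (fun _ _ => φ 0) i φ) := by
  have h0 : ∀ j, Function.update (fun _ _ => φ 0) i φ j 0 = φ 0 := fun j => by
    rcases eq_or_ne j i with rfl | hj <;> simp [*]
  refine ⟨fun j k => (h0 j).trans (h0 k).symm, fun j => ?_⟩
  rcases eq_or_ne j i with rfl | hj
  · simpa using hφ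
  · simpa [hj] using contDiff_const

lemma IsSubsol.isViscositySubsolutionOn {D : Data N} {u : Fin N → ℝ → ℝ} (hu : IsSubsol D u)
    (i : Fin N) : IsViscositySubsolutionOn D.lam (D.a i) (D.H i) (u i) (Ioo 0 (D.ℓ i)) := by
  intro φ hφ t ht hmax
  have hΦi : Function.update (fun _ _ => φ 0) i φ i = φ := Function.update_self _ _ _
  have h := (hu.2.2 _ (isTest_update_const hφ i)).1 i t ht
    (localMaxEdge_of_isLocalMax (by simpa only [hΦi] using hmax))
  simpa only [hΦi, G] using h

lemma IsSupersol.isViscositySubsolutionOn_neg {D : Data N} {v : Fin N → ℝ → ℝ}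
    (hv : IsSupersol D v) (i : Fin N) :
    IsViscositySubsolutionOn D.lam (D.a i) (fun t p => -D.H i t (-p)) (-v i)
      (Ioo 0 (D.ℓ i)) := by
  intro φ hφ t ht hmax
  have hΦi : Function.update (fun _ _ => -φ 0) i (fun s => -φ s) i = fun s => -φ s :=
    Function.update_self _ _ _
  have hmin : IsLocalMin (fun s => v i s - -φ s) t := by
    simpa only [Pi.neg_apply, neg_sub, sub_neg_eq_add, add_comm, neg_neg] using hmax.neg
  have h := (hv.2.2 _ (isTest_update_const hφ.neg i)).1 i t ht
    (localMinEdge_of_isLocalMin (by simpa only [hΦi] using hmin))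
  simp only [hΦi, G, deriv.fun_neg'] at h
  simp only [Pi.neg_apply]
  linarith

lemma Ham.exists_abs_le {D : Data N} {C : ℝ} {i : Fin N} (h : Ham D C i) :
    ∃ B, ∀ t ∈ Icc 0 (D.ℓ i), ∀ p, |D.H i t p| ≤ B + C * |p| := by
  have hcont : ContinuousOn (fun t => D.H i t 0) (Icc 0 (D.ℓ i)) :=
    (D.H_cont i).comp (continuousOn_id.prodMk continuousOn_const) fun t ht => ⟨ht, mem_univ _⟩
  obtain ⟨B, hB⟩ := isCompact_Icc.exists_bound_of_continuousOn hcont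
  refine ⟨B, fun t ht p => ?_⟩
  have h0 := hB t ht
  have hp := h.2 t ht p 0
  rw [Real.norm_eq_abs] at h0
  rw [sub_zero] at hp
  linarith [abs_sub_abs_le_abs_sub (D.H i t p) (D.H i t 0)]

lemma Data.eventually_half_le_a (D : Data N) {i : Fin N} (hai : 0 < D.a i 0) :
    ∀ᶠ t in 𝓝[>] 0, D.a i 0 / 2 ≤ D.a i t :=
  ((D.a_cont i 0 ⟨le_rfl, (D.ℓ_pos i).le⟩).mono_of_mem_nhdsWithin
    (Icc_mem_nhdsGT (D.ℓ_pos i))).eventually_const_le (half_lt_self hai)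

theorem key_lemma_nondegenerate_general (N : ℕ) (D : Data N) (C : ℝ)
    (hSteady : Steady D C)
    (u v : Fin N → ℝ → ℝ) (hu : IsSubsol D u) (hv : IsSupersol D v) :
    ∀ i, 0 < D.a i 0 →
      diffQuotLiminf (u i) = diffQuotLimsup (u i) ∧
      diffQuotLiminf (v i) = diffQuotLimsup (v i) := by
  intro i hai
  obtain ⟨hC, hHam, -⟩ := hSteady
  obtain ⟨B, hB⟩ := (hHam i).exists_abs_le
  have hIcc : ∀ᶠ t in 𝓝[>] (0 : ℝ), t ∈ Icc 0 (D.ℓ i) := Icc_mem_nhdsGT (D.ℓ_pos i)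
  have hA := D.eventually_half_le_a hai
  constructor
  · refine diffQuotLiminf_eq_diffQuotLimsup_of_isViscositySubsolutionOn D.lam_pos.le hC
      (half_pos hai) (D.ℓ_pos i) hA (B := B) ?_ (hu.1 i) (hu.isViscositySubsolutionOn i)
    filter_upwards [hIcc] with t ht p
    linarith [(abs_le.1 (hB t ht p)).1]
  · have hH : ∀ᶠ t in 𝓝[>] 0, ∀ p, -B - C * |p| ≤ -D.H i t (-p) := by
      filter_upwards [hIcc] with t ht p
      have h := hB t ht (-p)
      rw [abs_neg] at h
      linarith [(abs_le.1 h).2]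
    have h := diffQuotLiminf_eq_diffQuotLimsup_of_isViscositySubsolutionOn D.lam_pos.le hC
      (half_pos hai) (D.ℓ_pos i) hA hH (hv.1 i).neg (hv.isViscositySubsolutionOn_neg i)
    rwa [diffQuotLiminf_neg, diffQuotLimsup_neg, neg_inj, eq_comm] at h

/-- Lemma 4.2 (iv), key lemma, nondegenerate branches.
Under the steady assumptions, if `u − v` attains its maximum over `Γ` at `O`,
then on every edge with `a_i(O) > 0` the difference quotients of `u_i` and
`v_i` at `0⁺` have limits: `p̲_i = p̄_i` and `q̲_i = q̄_i`. -/
theorem key_lemma_nondegenerate (N : ℕ) (D : Data N) (C : ℝ)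
    (hSteady : Steady D C)
    (u v : Fin N → ℝ → ℝ) (hu : IsSubsol D u) (hv : IsSupersol D v)
    (hmax : ∀ i, ∀ t ∈ Set.Icc (0:ℝ) (D.ℓ i), u i t - v i t ≤ u i 0 - v i 0) :
    ∀ i, 0 < D.a i 0 →
      diffQuotLiminf (u i) = diffQuotLimsup (u i) ∧
      diffQuotLiminf (v i) = diffQuotLimsup (v i) :=
  key_lemma_nondegenerate_general N D C hSteady u v hu hv

end Paper
end

section
/- Localization of the maximum for the penalized test function: let Γ be a junction, w ∈ USC(Γ) bounded, y ∈ Γ, L, K > 0, and ψ(x) = L(ρ(x,y) − Kρ(x,y)²). Then the maximum of w − ψ over Γ ∩ {x : ρ(x,y) ≤ (4K)^{-1}} is attained at some x̄ satisfying (3L/4)ρ(x̄,y) ≤ ψ(x̄) ≤ w(x̄) − w(y) ≤ osc(w) ≤ 2‖w‖_∞. If moreover L > 16·osc(w)·K/3, then ρ(x̄,y) < (4K)^{-1}; and if in addition x̄ ≠ y, then ψ is differentiable along each edge at x̄ with L/2 ≤ |ψ_{x_j}(x̄)| ≤ L for every j for which the edge-derivative is defined at x̄. -/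
/-! The constraint set `{ρ(·,y) ≤ (4K)⁻¹}` is compact on each of the finitely many edges and
`w - ψ` is upper semicontinuous there, so the maximum is attained. Testing the maximality against
`x = y`, where `ψ = 0`, gives `ψ(x̄) ≤ w(x̄) - w(y) ≤ osc w`, while `Kρ ≤ 1/4` gives
`ψ ≥ (3L/4)ρ`; for `L > 16 osc(w) K/3` the two bounds force `ρ(x̄,y) < (4K)⁻¹`. Away from `y` the
distance `ρ(·,y)` has slope `±1` along every edge, so `|ψ_{x_j}| = L(1 - 2Kρ) ∈ [L/2, L]`. -/

open Set Filter Topology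

namespace Paper14

variable {N : ℕ}

/-- Geodesic distance on the junction from the point `(j,s)` (edge `j`,
arc-length parameter `s`) to the point `y = (iy, ty)`. -/
noncomputable def rd (iy : Fin N) (ty : ℝ) (j : Fin N) (s : ℝ) : ℝ :=
  if j = iy then |s - ty| else s + ty

/-- The penalized test function `ψ(x) = L(ρ(x,y) − K ρ(x,y)²)`, edge-wise. -/
noncomputable def psi (L K : ℝ) (iy : Fin N) (ty : ℝ) (j : Fin N) (s : ℝ) : ℝ :=
  L * (rd iy ty j s - K * (rd iy ty j s) ^ 2)

/-- Oscillation of an edge-wise function over the junction `Γ`. -/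
noncomputable def oscJ (ℓ : Fin N → ℝ) (w : Fin N → ℝ → ℝ) : ℝ :=
  sSup (⋃ i, w i '' Set.Icc 0 (ℓ i)) - sInf (⋃ i, w i '' Set.Icc 0 (ℓ i))

/-- Sup norm of an edge-wise function over the junction `Γ`. -/
noncomputable def supNorm (ℓ : Fin N → ℝ) (w : Fin N → ℝ → ℝ) : ℝ :=
  sSup (⋃ i, (fun s => |w i s|) '' Set.Icc 0 (ℓ i))

theorem exists_forall_le_of_upperSemicontinuousOn {ι X β : Type*} [Finite ι]
    [TopologicalSpace X] [LinearOrder β] {S : ι → Set X} {f : ι → X → β}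
    (hS : ∀ i, IsCompact (S i)) (hf : ∀ i, UpperSemicontinuousOn (f i) (S i))
    {i₀ : ι} (hi₀ : (S i₀).Nonempty) :
    ∃ i, ∃ x ∈ S i, ∀ j, ∀ y ∈ S j, f j y ≤ f i x := by
  have : Nonempty X := hi₀.to_subtype.map Subtype.val
  have hmax : ∀ i, (S i).Nonempty → ∃ x ∈ S i, IsMaxOn (f i) (S i) x :=
    fun i hne => (hf i).exists_isMaxOn hne (hS i)
  choose! m hmS hm using hmax
  obtain ⟨i, hi, hbest⟩ := Set.exists_max_image {i | (S i).Nonempty} (fun i => f i (m i))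
    (Set.toFinite _) ⟨i₀, hi₀⟩
  exact ⟨i, m i, hmS i hi, fun j y hy => (hm j ⟨y, hy⟩ hy).trans (hbest j ⟨y, hy⟩)⟩

theorem sSup_sub_sInf_le_two_mul_sSup_abs {A : Set ℝ} (hA : BddAbove (abs '' A)) :
    sSup A - sInf A ≤ 2 * sSup (abs '' A) := by
  rcases A.eq_empty_or_nonempty with rfl | hne
  · simp
  have hsup : sSup A ≤ sSup (abs '' A) :=
    csSup_le hne fun a ha => (le_abs_self a).trans (le_csSup hA (mem_image_of_mem _ ha))
  have hinf : -sSup (abs '' A) ≤ sInf A :=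
    le_csInf hne fun a ha => neg_le.1 ((neg_le_abs a).trans (le_csSup hA (mem_image_of_mem _ ha)))
  linarith

theorem three_quarters_mul_le_of_le_inv {L K r : ℝ} (hL : 0 ≤ L) (hK : 0 < K) (hr : 0 ≤ r)
    (hrK : r ≤ (4 * K)⁻¹) : 3 * L / 4 * r ≤ L * (r - K * r ^ 2) := by
  rw [← one_div, le_div_iff₀ (by positivity)] at hrK
  nlinarith [mul_nonneg (mul_nonneg hL hr) (sub_nonneg.2 hrK)]

theorem lt_inv_four_mul_of_three_quarters_mul_le {L K r c : ℝ} (hL : 0 < L) (hK : 0 < K)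
    (hr : 3 * L / 4 * r ≤ c) (hc : 16 * c * K / 3 < L) : r < (4 * K)⁻¹ := by
  rw [← one_div, lt_div_iff₀ (by positivity)]
  nlinarith [mul_le_mul_of_nonneg_right hr hK.le]

theorem half_le_abs_one_sub_and_abs_one_sub_le {K r : ℝ} (hK : 0 < K) (hr : 0 ≤ r)
    (hrK : r < (4 * K)⁻¹) : 1 / 2 ≤ |1 - 2 * K * r| ∧ |1 - 2 * K * r| ≤ 1 := by
  rw [← one_div, lt_div_iff₀ (by positivity)] at hrK
  have hKr : 0 ≤ K * r := mul_nonneg hK.le hr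
  rw [abs_of_nonneg (by linarith)]
  constructor <;> linarith

section Distance

variable {iy : Fin N} {ty : ℝ}

theorem rd_self : rd iy ty iy ty = 0 := by simp [rd]

theorem psi_self (L K : ℝ) : psi L K iy ty iy ty = 0 := by simp [psi, rd_self]

theorem rd_nonneg (j : Fin N) {s : ℝ} (hs : 0 ≤ s) (hty : 0 ≤ ty) : 0 ≤ rd iy ty j s := by
  unfold rd; split_ifs <;> positivity

theorem rd_zero (j : Fin N) (hty : 0 ≤ ty) : rd iy ty j 0 = ty := by
  unfold rd; split_ifs <;> simp [abs_of_nonneg hty]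

theorem continuous_rd (j : Fin N) : Continuous (rd iy ty j) := by
  unfold rd; split_ifs <;> fun_prop

theorem continuous_psi (L K : ℝ) (j : Fin N) : Continuous (psi L K iy ty j) := by
  have := continuous_rd (iy := iy) (ty := ty) j
  unfold psi; fun_prop

theorem exists_hasDerivAt_rd {j : Fin N} {s : ℝ} (h : ¬(j = iy ∧ s = ty)) :
    ∃ σ : ℝ, |σ| = 1 ∧ HasDerivAt (rd iy ty j) σ s := by
  by_cases hj : j = iy
  · subst hj
    have hrd : rd j ty j = fun s => |s - ty| := by funext s; simp [rd]
    have hsub := (hasDerivAt_id' s).sub_const ty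
    rw [hrd]
    rcases lt_or_gt_of_ne (sub_ne_zero.2 fun hs => h ⟨rfl, hs⟩) with hneg | hpos
    · have habs := (hasDerivAt_abs_neg hneg).comp s hsub
      exact ⟨-1, by simp, habs.congr_deriv (mul_one _)⟩
    · have habs := (hasDerivAt_abs_pos hpos).comp s hsub
      exact ⟨1, by simp, habs.congr_deriv (mul_one _)⟩
  · have hrd : rd iy ty j = fun s => s + ty := by funext s; simp [rd, hj]
    exact ⟨1, by simp, hrd ▸ (hasDerivAt_id s).add_const ty⟩

theorem abs_deriv_psi {L K : ℝ} (hL : 0 ≤ L) {j : Fin N} {s : ℝ} (h : ¬(j = iy ∧ s = ty)) :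
    |deriv (psi L K iy ty j) s| = L * |1 - 2 * K * rd iy ty j s| := by
  obtain ⟨σ, hσ, hrd⟩ := exists_hasDerivAt_rd h
  have hpsi : HasDerivAt (psi L K iy ty j) (L * (1 - 2 * K * rd iy ty j s) * σ) s := by
    refine ((hrd.sub ((hrd.pow 2).const_mul K)).const_mul L).congr_deriv ?_
    push_cast
    ring
  rw [hpsi.deriv, abs_mul, abs_mul, hσ, abs_of_nonneg hL, mul_one]

theorem half_le_abs_deriv_psi_and_le {L K : ℝ} (hL : 0 < L) (hK : 0 < K) {j : Fin N} {s : ℝ}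
    (hs : 0 ≤ s) (hty : 0 ≤ ty) (h : ¬(j = iy ∧ s = ty)) (hr : rd iy ty j s < (4 * K)⁻¹) :
    L / 2 ≤ |deriv (psi L K iy ty j) s| ∧ |deriv (psi L K iy ty j) s| ≤ L := by
  obtain ⟨hlow, hup⟩ := half_le_abs_one_sub_and_abs_one_sub_le hK (rd_nonneg j hs hty) hr
  rw [abs_deriv_psi hL.le h]
  constructor <;> nlinarith

end Distance

section Oscillation

variable {ℓ : Fin N → ℝ} {w : Fin N → ℝ → ℝ} {M : ℝ}

theorem abs_le_of_mem_iUnion_image (hM : ∀ i, ∀ t ∈ Icc (0:ℝ) (ℓ i), |w i t| ≤ M) :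
    ∀ a ∈ ⋃ i, w i '' Icc 0 (ℓ i), |a| ≤ M := by
  simp only [mem_iUnion, mem_image]
  rintro _ ⟨i, t, ht, rfl⟩
  exact hM i t ht

theorem sub_le_oscJ (hM : ∀ i, ∀ t ∈ Icc (0:ℝ) (ℓ i), |w i t| ≤ M) {i j : Fin N} {s t : ℝ}
    (hs : s ∈ Icc 0 (ℓ j)) (ht : t ∈ Icc 0 (ℓ i)) : w j s - w i t ≤ oscJ ℓ w := by
  have hb := abs_le_of_mem_iUnion_image hM
  have hsup : w j s ≤ sSup (⋃ i, w i '' Icc 0 (ℓ i)) :=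
    le_csSup ⟨M, fun a ha => (le_abs_self a).trans (hb a ha)⟩
      (mem_iUnion_of_mem j (mem_image_of_mem _ hs))
  have hinf : sInf (⋃ i, w i '' Icc 0 (ℓ i)) ≤ w i t :=
    csInf_le ⟨-M, fun a ha => neg_le.1 ((neg_le_abs a).trans (hb a ha))⟩
      (mem_iUnion_of_mem i (mem_image_of_mem _ ht))
  unfold oscJ
  linarith

theorem oscJ_le_two_mul_supNorm (hM : ∀ i, ∀ t ∈ Icc (0:ℝ) (ℓ i), |w i t| ≤ M) :
    oscJ ℓ w ≤ 2 * supNorm ℓ w := by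
  have himage : ⋃ i, (fun s => |w i s|) '' Icc 0 (ℓ i) = abs '' ⋃ i, w i '' Icc 0 (ℓ i) := by
    simp only [image_iUnion, image_image]
  unfold oscJ supNorm
  rw [himage]
  exact sSup_sub_sInf_le_two_mul_sSup_abs ⟨M, forall_mem_image.2 (abs_le_of_mem_iUnion_image hM)⟩

end Oscillation

theorem penalized_max_general (ℓ : Fin N → ℝ)
    (w : Fin N → ℝ → ℝ)
    (husc : ∀ i, UpperSemicontinuousOn (w i) (Set.Icc 0 (ℓ i)))
    (hbdd : ∃ M : ℝ, ∀ i, ∀ t ∈ Set.Icc (0:ℝ) (ℓ i), |w i t| ≤ M)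
    (iy : Fin N) (ty : ℝ) (hty : ty ∈ Set.Icc (0:ℝ) (ℓ iy))
    (L K : ℝ) (hLpos : 0 < L) (hKpos : 0 < K) :
    ∃ jb : Fin N, ∃ tb ∈ Set.Icc (0:ℝ) (ℓ jb),
      rd iy ty jb tb ≤ (4 * K)⁻¹ ∧
      (∀ j, ∀ s ∈ Set.Icc (0:ℝ) (ℓ j), rd iy ty j s ≤ (4 * K)⁻¹ →
        w j s - psi L K iy ty j s ≤ w jb tb - psi L K iy ty jb tb) ∧
      (3 * L / 4) * rd iy ty jb tb ≤ psi L K iy ty jb tb ∧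
      psi L K iy ty jb tb ≤ w jb tb - w iy ty ∧
      w jb tb - w iy ty ≤ oscJ ℓ w ∧
      oscJ ℓ w ≤ 2 * supNorm ℓ w ∧
      (L > 16 * oscJ ℓ w * K / 3 →
        rd iy ty jb tb < (4 * K)⁻¹ ∧
        (¬((jb = iy ∧ tb = ty) ∨ (tb = 0 ∧ ty = 0)) →
          (L / 2 ≤ |deriv (psi L K iy ty jb) tb| ∧
            |deriv (psi L K iy ty jb) tb| ≤ L) ∧
          (tb = 0 → ∀ j, L / 2 ≤ |deriv (psi L K iy ty j) 0| ∧
            |deriv (psi L K iy ty j) 0| ≤ L))) := by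
  obtain ⟨M, hM⟩ := hbdd
  have hy : ty ∈ Icc 0 (ℓ iy) ∩ rd iy ty iy ⁻¹' Iic (4 * K)⁻¹ :=
    ⟨hty, by simp only [mem_preimage, rd_self, mem_Iic]; positivity⟩
  have hdiff : ∀ j, UpperSemicontinuousOn (fun s => w j s - psi L K iy ty j s) (Icc 0 (ℓ j)) :=
    fun j => by simpa only [sub_eq_add_neg, Pi.neg_apply] using
      (husc j).add (continuous_psi L K j).neg.continuousOn.upperSemicontinuousOn
  obtain ⟨jb, tb, ⟨htb, hrb⟩, hmax⟩ := exists_forall_le_of_upperSemicontinuousOn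
    (fun j => isCompact_Icc.inter_right (isClosed_Iic.preimage (continuous_rd j)))
    (fun j => (hdiff j).mono inter_subset_left) ⟨ty, hy⟩
  have hwy : psi L K iy ty jb tb ≤ w jb tb - w iy ty := by
    have := hmax iy ty hy
    simp only [psi_self, sub_zero] at this
    linarith
  have hpsi := three_quarters_mul_le_of_le_inv hLpos.le hKpos (rd_nonneg jb htb.1 hty.1) hrb
  have hosc := sub_le_oscJ hM htb hty
  refine ⟨jb, tb, htb, hrb, fun j s hs hr => hmax j s ⟨hs, hr⟩, hpsi, hwy, hosc,
    oscJ_le_two_mul_supNorm hM, fun hL => ?_⟩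
  have hlt := lt_inv_four_mul_of_three_quarters_mul_le hLpos hKpos (hpsi.trans (hwy.trans hosc)) hL
  refine ⟨hlt, fun hne => ?_⟩
  obtain ⟨hne_y, hne_zero⟩ := not_or.1 hne
  refine ⟨half_le_abs_deriv_psi_and_le hLpos hKpos htb.1 hty.1 hne_y hlt, fun htb0 j => ?_⟩
  subst htb0
  rw [rd_zero jb hty.1] at hlt
  refine half_le_abs_deriv_psi_and_le hLpos hKpos le_rfl hty.1
    (fun h => hne_zero ⟨rfl, h.2.symm⟩) ?_
  rwa [rd_zero j hty.1]

/-- Lemma A.1, localization of the maximum for the penalized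
test function `ψ = L(ρ(·,y) − Kρ(·,y)²)`.  For a bounded `w ∈ USC(Γ)`, the
maximum of `w − ψ` over `{ρ(·,y) ≤ (4K)⁻¹}` is attained at some `x̄ = (jb,tb)`
with `(3L/4)ρ(x̄,y) ≤ ψ(x̄) ≤ w(x̄) − w(y) ≤ osc(w) ≤ 2‖w‖_∞`; if
`L > 16 osc(w) K/3` then `ρ(x̄,y) < (4K)⁻¹`, and if moreover `x̄ ≠ y` then the
edge derivatives of `ψ` at `x̄` satisfy `L/2 ≤ |ψ_{x_j}(x̄)| ≤ L`. -/
theorem penalized_max (ℓ : Fin N → ℝ) (hℓ : ∀ i, 0 < ℓ i)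
    (w : Fin N → ℝ → ℝ)
    (hglue : ∀ i j : Fin N, w i 0 = w j 0)
    (husc : ∀ i, UpperSemicontinuousOn (w i) (Set.Icc 0 (ℓ i)))
    (hbdd : ∃ M : ℝ, ∀ i, ∀ t ∈ Set.Icc (0:ℝ) (ℓ i), |w i t| ≤ M)
    (iy : Fin N) (ty : ℝ) (hty : ty ∈ Set.Icc (0:ℝ) (ℓ iy))
    (L K : ℝ) (hLpos : 0 < L) (hKpos : 0 < K) :
    ∃ jb : Fin N, ∃ tb ∈ Set.Icc (0:ℝ) (ℓ jb),
      rd iy ty jb tb ≤ (4 * K)⁻¹ ∧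
      (∀ j, ∀ s ∈ Set.Icc (0:ℝ) (ℓ j), rd iy ty j s ≤ (4 * K)⁻¹ →
        w j s - psi L K iy ty j s ≤ w jb tb - psi L K iy ty jb tb) ∧
      (3 * L / 4) * rd iy ty jb tb ≤ psi L K iy ty jb tb ∧
      psi L K iy ty jb tb ≤ w jb tb - w iy ty ∧
      w jb tb - w iy ty ≤ oscJ ℓ w ∧
      oscJ ℓ w ≤ 2 * supNorm ℓ w ∧
      (L > 16 * oscJ ℓ w * K / 3 →
        rd iy ty jb tb < (4 * K)⁻¹ ∧
        (¬((jb = iy ∧ tb = ty) ∨ (tb = 0 ∧ ty = 0)) →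
          (L / 2 ≤ |deriv (psi L K iy ty jb) tb| ∧
            |deriv (psi L K iy ty jb) tb| ≤ L) ∧
          (tb = 0 → ∀ j, L / 2 ≤ |deriv (psi L K iy ty j) 0| ∧
            |deriv (psi L K iy ty j) 0| ≤ L))) :=
  penalized_max_general ℓ w husc hbdd iy ty hty L K hLpos hKpos

end Paper14
end

section
/- One-dimensional superjet test lemma, part (ii): let a > 0 and w : [0,a] → ℝ be upper semicontinuous, and set p̲ = liminf_{x→0⁺}(w(x)−w(0))/x and p̄ = limsup_{x→0⁺}(w(x)−w(0))/x. Then for every X ∈ ℝ and every p ∈ ℝ with p̲ < p < p̄, there exist sequences (x_k) and (b_k) with 0 < x_k < b_k and b_k → 0, such that for each k, x_k is a maximum point of χ(x) = w(x) − w(0) − px + (1/2)Xx² over [0, b_k]. -/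
open Set Filter Topology

/-- An upper semicontinuous function attains its maximum on a nonempty compact set. -/
lemma usc_exists_max {f : ℝ → ℝ} {s : Set ℝ} (hs : IsCompact s) (hne : s.Nonempty)
    (hf : UpperSemicontinuousOn f s) : ∃ x ∈ s, ∀ y ∈ s, f y ≤ f x := by
  set g : ℝ → EReal := fun x => ((f x : ℝ) : EReal) with hg
  set c : EReal := sSup (g '' s) with hc
  have hne' : (g '' s).Nonempty := hne.image g
  obtain ⟨v, -, hvc, hvmem⟩ := exists_seq_tendsto_sSup hne' (OrderTop.bddAbove _)
  choose u hu hgu using fun n => hvmem n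
  obtain ⟨x, hxs, φ, hφ, hφt⟩ := hs.tendsto_subseq hu
  have hsub : Tendsto (v ∘ φ) atTop (𝓝 c) := hvc.comp hφ.tendsto_atTop
  have hsub' : Tendsto (fun n => g (u (φ n))) atTop (𝓝 c) := by
    have : (fun n => g (u (φ n))) = v ∘ φ := by
      funext n; exact hgu (φ n)
    rw [this]; exact hsub
  have htw : Tendsto (u ∘ φ) atTop (𝓝[s] x) := by
    refine tendsto_nhdsWithin_iff.2 ⟨hφt, Eventually.of_forall fun n => hu (φ n)⟩
  have hcle : c ≤ g x := by
    by_contra h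
    push_neg at h
    obtain ⟨r, hr1, hr2⟩ := EReal.lt_iff_exists_real_btwn.mp h
    simp only [hg] at hr1
    have hfx : f x < r := by exact_mod_cast hr1
    have hev : ∀ᶠ z in 𝓝[s] x, f z < r := hf x hxs r hfx
    have hev' : ∀ᶠ n in atTop, f (u (φ n)) < r := htw.eventually hev
    have : c ≤ (r : EReal) := by
      refine le_of_tendsto hsub' ?_
      filter_upwards [hev'] with n hn
      simp only [hg]
      exact_mod_cast hn.le
    exact absurd (lt_of_le_of_lt this hr2) (lt_irrefl _)
  refine ⟨x, hxs, fun y hy => ?_⟩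
  have h1 : g y ≤ c := le_sSup ⟨y, hy, rfl⟩
  have h2 := h1.trans hcle
  simp only [hg] at h2
  exact_mod_cast h2

/-- Lemma A.2 (ii), one-dimensional superjet test lemma.
If `w` is upper semicontinuous on `[0,a]` and
`p̲ = liminf_{x→0⁺}(w(x)−w(0))/x < p < p̄ = limsup_{x→0⁺}(w(x)−w(0))/x`
(extended reals), then for every `X ∈ ℝ` there are sequences
`0 < x_k < b_k → 0` such that `x_k` maximizes
`χ(x) = w(x) − w(0) − p x + ½ X x²` over `[0, b_k]`. -/
theorem superjet_lemma_ii (a : ℝ) (ha : 0 < a) (w : ℝ → ℝ)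
    (hw : UpperSemicontinuousOn w (Set.Icc 0 a)) (p X : ℝ)
    (hlow : Filter.liminf
      (fun x : ℝ => (((w x - w 0) / x : ℝ) : EReal)) (𝓝[>] (0:ℝ)) < (p : EReal))
    (hhigh : (p : EReal) < Filter.limsup
      (fun x : ℝ => (((w x - w 0) / x : ℝ) : EReal)) (𝓝[>] (0:ℝ))) :
    ∃ xk bk : ℕ → ℝ,
      (∀ k, 0 < xk k ∧ xk k < bk k ∧ bk k ≤ a) ∧
      Filter.Tendsto bk Filter.atTop (𝓝 (0:ℝ)) ∧
      ∀ k, ∀ s ∈ Set.Icc (0:ℝ) (bk k),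
        w s - w 0 - p * s + (1/2) * X * s^2 ≤
          w (xk k) - w 0 - p * (xk k) + (1/2) * X * (xk k)^2 := by
  classical
  set χ : ℝ → ℝ := fun x => w x - w 0 - p * x + (1/2) * X * x^2 with hχ
  -- pick real p' with liminf < p' < p, and p'' with p < p'' < limsup
  obtain ⟨p', hp'1, hp'2'⟩ := EReal.lt_iff_exists_real_btwn.mp hlow
  obtain ⟨p'', hp''1', hp''2⟩ := EReal.lt_iff_exists_real_btwn.mp hhigh
  have hp'2 : p' < p := by exact_mod_cast hp'2'
  have hp''1 : p < p'' := by exact_mod_cast hp''1'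
  -- frequently small ratios and large ratios
  have Hlo : ∃ᶠ x in 𝓝[>] (0:ℝ), (w x - w 0) / x < p' := by
    have := Filter.frequently_lt_of_liminf_lt (f := 𝓝[>] (0:ℝ))
      (u := fun x : ℝ => (((w x - w 0) / x : ℝ) : EReal)) (by isBoundedDefault) hp'1
    exact this.mono fun x hx => by simpa using hx
  have Hhi : ∃ᶠ x in 𝓝[>] (0:ℝ), p'' < (w x - w 0) / x := by
    have := Filter.frequently_lt_of_lt_limsup (f := 𝓝[>] (0:ℝ))
      (u := fun x : ℝ => (((w x - w 0) / x : ℝ) : EReal)) (by isBoundedDefault) hp''2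
    exact this.mono fun x hx => by simpa using hx
  set δ : ℝ := min ((p - p') / (|X| + 1)) ((p'' - p) / (|X| + 1)) with hδdef
  have hXpos : (0:ℝ) < |X| + 1 := by positivity
  have hδpos : 0 < δ := by
    apply lt_min <;> [exact div_pos (by linarith) hXpos; exact div_pos (by linarith) hXpos]
  have hδ1 : |X| * δ ≤ p - p' := by
    have h1 : δ ≤ (p - p') / (|X| + 1) := min_le_left _ _
    have h2 : |X| * δ ≤ |X| * ((p - p') / (|X| + 1)) :=
      mul_le_mul_of_nonneg_left h1 (abs_nonneg X)
    have h3 : |X| * ((p - p') / (|X| + 1)) ≤ p - p' := by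
      rw [mul_div_assoc', div_le_iff₀ hXpos]
      nlinarith [abs_nonneg X]
    linarith
  have hδ2 : |X| * δ ≤ p'' - p := by
    have h1 : δ ≤ (p'' - p) / (|X| + 1) := min_le_right _ _
    have h2 : |X| * δ ≤ |X| * ((p'' - p) / (|X| + 1)) :=
      mul_le_mul_of_nonneg_left h1 (abs_nonneg X)
    have h3 : |X| * ((p'' - p) / (|X| + 1)) ≤ p'' - p := by
      rw [mul_div_assoc', div_le_iff₀ hXpos]
      nlinarith [abs_nonneg X]
    linarith
  -- χ is negative at points b ∈ (0, δ) with small ratio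
  have hχneg : ∀ b : ℝ, 0 < b → b < δ → (w b - w 0) / b < p' → χ b < 0 := by
    intro b hb hbδ hr
    have heq : w b - w 0 = ((w b - w 0) / b) * b := by field_simp
    have hX1 : X ≤ |X| := le_abs_self X
    have hχb : χ b = ((w b - w 0) / b) * b - p * b + (1/2) * X * b^2 := by
      simp only [hχ]; rw [← heq]
    rw [hχb]
    nlinarith [mul_pos hb hδpos, sq_nonneg b, mul_lt_mul_of_pos_right hr hb,
      mul_le_mul_of_nonneg_right hδ1 hb.le, mul_le_mul_of_nonneg_left hbδ.le (abs_nonneg X)]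
  -- χ is positive at points y ∈ (0, δ) with large ratio
  have hχpos : ∀ y : ℝ, 0 < y → y < δ → p'' < (w y - w 0) / y → 0 < χ y := by
    intro y hy hyδ hr
    have heq : w y - w 0 = ((w y - w 0) / y) * y := by field_simp
    have hX1 : -|X| ≤ X := neg_abs_le X
    have hχy : χ y = ((w y - w 0) / y) * y - p * y + (1/2) * X * y^2 := by
      simp only [hχ]; rw [← heq]
    rw [hχy]
    nlinarith [mul_pos hy hδpos, sq_nonneg y, mul_lt_mul_of_pos_right hr hy,
      mul_le_mul_of_nonneg_right hδ2 hy.le, mul_le_mul_of_nonneg_left hyδ.le (abs_nonneg X)]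
  -- choose b_k
  have hbex : ∀ k : ℕ, ∃ b : ℝ,
      (0 < b ∧ b < min (min a δ) (1 / (k + 1))) ∧ (w b - w 0) / b < p' := by
    intro k
    have hεpos : (0:ℝ) < min (min a δ) (1 / (k + 1)) := by
      apply lt_min (lt_min ha hδpos)
      positivity
    have hmem : Set.Ioo (0:ℝ) (min (min a δ) (1 / (k + 1))) ∈ 𝓝[>] (0:ℝ) :=
      Ioo_mem_nhdsGT_of_mem ⟨le_refl 0, hεpos⟩
    obtain ⟨b, hb1, hb2⟩ := (Hlo.and_eventually (eventually_of_mem hmem fun x hx => hx)).exists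
    exact ⟨b, ⟨hb2.1, hb2.2⟩, hb1⟩
  choose bk hbk hbkr using hbex
  have hbkpos : ∀ k, 0 < bk k := fun k => (hbk k).1
  have hbka : ∀ k, bk k < a := fun k => lt_of_lt_of_le (hbk k).2 (le_trans (min_le_left _ _) (min_le_left _ _))
  have hbkδ : ∀ k, bk k < δ := fun k => lt_of_lt_of_le (hbk k).2 (le_trans (min_le_left _ _) (min_le_right _ _))
  have hbkn : ∀ k, bk k ≤ 1 / (k + 1) := fun k => le_of_lt (lt_of_lt_of_le (hbk k).2 (min_le_right _ _))
  -- choose y_k ∈ (0, b_k) with large ratio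
  have hyex : ∀ k : ℕ, ∃ y : ℝ, (0 < y ∧ y < bk k) ∧ p'' < (w y - w 0) / y := by
    intro k
    have hmem : Set.Ioo (0:ℝ) (bk k) ∈ 𝓝[>] (0:ℝ) :=
      Ioo_mem_nhdsGT_of_mem ⟨le_refl 0, hbkpos k⟩
    obtain ⟨y, hy1, hy2⟩ := (Hhi.and_eventually (eventually_of_mem hmem fun x hx => hx)).exists
    exact ⟨y, ⟨hy2.1, hy2.2⟩, hy1⟩
  choose yk hyk hykr using hyex
  -- χ is USC on [0, b_k]
  have hχusc : ∀ k, UpperSemicontinuousOn χ (Set.Icc 0 (bk k)) := by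
    intro k
    have hsub : Set.Icc (0:ℝ) (bk k) ⊆ Set.Icc 0 a :=
      Set.Icc_subset_Icc le_rfl (hbka k).le
    have h1 : UpperSemicontinuousOn w (Set.Icc 0 (bk k)) := hw.mono hsub
    have h2 : ContinuousOn (fun x : ℝ => -w 0 - p * x + (1/2) * X * x^2)
        (Set.Icc 0 (bk k)) := by fun_prop
    have h3 := h1.add h2.upperSemicontinuousOn
    have h4 : χ = fun z => w z + (-w 0 - p * z + (1/2) * X * z^2) := by
      funext z; simp only [hχ]; ring
    rw [h4]; exact h3
  -- choose x_k as max of χ on [0, b_k]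
  have hxex : ∀ k : ℕ, ∃ x ∈ Set.Icc (0:ℝ) (bk k), ∀ y ∈ Set.Icc (0:ℝ) (bk k), χ y ≤ χ x := by
    intro k
    exact usc_exists_max isCompact_Icc (Set.nonempty_Icc.2 (hbkpos k).le) (hχusc k)
  choose xk hxkmem hxkmax using hxex
  refine ⟨xk, bk, fun k => ?_, ?_, fun k s hs => hxkmax k s hs⟩
  · -- 0 < x_k < b_k ≤ a
    have hχ0 : χ 0 = 0 := by simp [hχ]
    have hχbneg : χ (bk k) < 0 := hχneg _ (hbkpos k) (hbkδ k) (hbkr k)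
    have hχypos : 0 < χ (yk k) := hχpos _ (hyk k).1 ((hyk k).2.trans (hbkδ k)) (hykr k)
    have hmax : 0 < χ (xk k) := by
      have := hxkmax k (yk k) ⟨(hyk k).1.le, (hyk k).2.le⟩
      linarith
    constructor
    · rcases lt_or_eq_of_le (hxkmem k).1 with h | h
      · exact h
      · exfalso; rw [← h] at hmax; linarith
    constructor
    · rcases lt_or_eq_of_le (hxkmem k).2 with h | h
      · exact h
      · exfalso; rw [h] at hmax; linarith
    · exact (hbka k).le
  · -- b_k → 0
    apply squeeze_zero (fun k => (hbkpos k).le) hbkn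
    exact tendsto_one_div_add_atTop_nhds_zero_nat
end

section
/- Hopf lemma for viscosity subsolutions on an interval: let ℓ > 0, λ > 0, L > 0, and let a : [0,ℓ] → [0,∞) satisfy a = σ² for some Lipschitz function σ, with a(0) > 0. Let w : [0,ℓ] → ℝ be upper semicontinuous and a viscosity subsolution of λw − a(x)w_xx − L|w_x| ≤ 0 on (0,ℓ), meaning: for every φ ∈ C²((0,ℓ)) and every local maximum point x₀ ∈ (0,ℓ) of w − φ, one has λw(x₀) − a(x₀)φ''(x₀) − L|φ'(x₀)| ≤ 0. If w has a strict local maximum at 0 with w(0) > 0, and w has a one-sided derivative w_x(0) = lim_{x→0⁺}(w(x)−w(0))/x, then −w_x(0) > 0. -/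
/-!
Compare `w` with the barrier `φ x = w 0 - ε (exp (K x) - 1)`. Since `a` is continuous with
`a 0 > 0`, for `K` large the term `-a φ''` dominates `L |φ'|` near `0`, so `φ` is a strict
classical supersolution on some `[0, r]`; choosing `ε` small makes `φ ≥ 0` there and `φ r ≥ w r`.
An interior positive maximum of `w - φ` would contradict the subsolution property, so `w ≤ φ` on
`[0, r]` with equality at `0`, and comparing difference quotients gives `w_x(0) ≤ φ'(0) = -εK < 0`.
-/

open Set Filter Topology Real

def IsViscositySubsolution (lam L ℓ : ℝ) (a w : ℝ → ℝ) : Prop :=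
  ∀ φ : ℝ → ℝ, ContDiff ℝ 2 φ → ∀ x₀ ∈ Ioo (0:ℝ) ℓ,
    (∃ δ > 0, ∀ s ∈ Ioo (0:ℝ) ℓ, |s - x₀| < δ → w s - φ s ≤ w x₀ - φ x₀) →
    lam * w x₀ - a x₀ * deriv (deriv φ) x₀ - L * |deriv φ x₀| ≤ 0

theorem le_on_Icc_of_le_at_endpoints_and_maxima {w φ : ℝ → ℝ} {p q : ℝ}
    (hw : UpperSemicontinuousOn w (Icc p q)) (hφ : ContinuousOn φ (Icc p q))
    (hp : w p ≤ φ p) (hq : w q ≤ φ q)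
    (hmax : ∀ x ∈ Ioo p q, IsMaxOn (fun y => w y - φ y) (Icc p q) x → w x ≤ φ x) :
    ∀ x ∈ Icc p q, w x ≤ φ x := by
  intro x hx
  have hdiff : UpperSemicontinuousOn (fun y => w y - φ y) (Icc p q) := by
    simpa only [sub_eq_add_neg, Pi.neg_apply] using hw.add hφ.neg.upperSemicontinuousOn
  obtain ⟨x₀, hx₀, hx₀max⟩ := hdiff.exists_isMaxOn ⟨x, hx⟩ isCompact_Icc
  have hx₀le : w x₀ ≤ φ x₀ := by
    rcases eq_endpoints_or_mem_Ioo_of_mem_Icc hx₀ with rfl | rfl | hx₀'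
    exacts [hp, hq, hmax x₀ hx₀' hx₀max]
  linarith [isMaxOn_iff.1 hx₀max x hx]

theorem IsViscositySubsolution.le_of_strictSupersolution {lam L ℓ p q : ℝ} {a w φ : ℝ → ℝ}
    (hsub : IsViscositySubsolution lam L ℓ a w) (hlam : 0 ≤ lam) (hp : 0 ≤ p) (hq : q ≤ ℓ)
    (hw : UpperSemicontinuousOn w (Icc p q)) (hφ : ContDiff ℝ 2 φ)
    (hφ_super : ∀ x ∈ Ioo p q, 0 < lam * φ x - a x * deriv (deriv φ) x - L * |deriv φ x|)
    (hwp : w p ≤ φ p) (hwq : w q ≤ φ q) :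
    ∀ x ∈ Icc p q, w x ≤ φ x := by
  refine le_on_Icc_of_le_at_endpoints_and_maxima hw hφ.continuous.continuousOn hwp hwq ?_
  intro x hx hxmax
  obtain ⟨δ, hδ, hball⟩ := Metric.mem_nhds_iff.1 (isOpen_Ioo.mem_nhds hx)
  have hloc : ∃ δ > 0, ∀ s ∈ Ioo (0:ℝ) ℓ, |s - x| < δ → w s - φ s ≤ w x - φ x :=
    ⟨δ, hδ, fun s _ hs => hxmax (Ioo_subset_Icc_self (hball (by rwa [Metric.mem_ball, dist_eq])))⟩
  have hx_sub := hsub φ hφ x ⟨hp.trans_lt hx.1, hx.2.trans_le hq⟩ hloc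
  have hx_super := hφ_super x hx
  exact (lt_of_mul_lt_mul_left (by linarith) hlam).le

theorem le_of_tendsto_slope_of_eventually_le {w φ : ℝ → ℝ} {x₀ d d' : ℝ}
    (hle : ∀ᶠ x in 𝓝[>] x₀, w x ≤ φ x) (heq : w x₀ = φ x₀)
    (hw : Tendsto (fun x => (w x - w x₀) / (x - x₀)) (𝓝[>] x₀) (𝓝 d))
    (hφ : HasDerivWithinAt φ d' (Ioi x₀) x₀) : d ≤ d' := by
  refine le_of_tendsto_of_tendsto hw ((hasDerivWithinAt_iff_tendsto_slope' self_notMem_Ioi).1 hφ) ?_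
  filter_upwards [hle, self_mem_nhdsWithin] with x hx hx₀
  rw [slope_def_field, heq]
  exact div_le_div_of_nonneg_right (by linarith) (sub_pos.2 hx₀).le

noncomputable def hopfBarrier (c ε K x : ℝ) : ℝ := c - ε * (exp (K * x) - 1)

section hopfBarrier

variable {c ε K : ℝ}

@[simp]
theorem hopfBarrier_zero : hopfBarrier c ε K 0 = c := by
  simp [hopfBarrier]

theorem hasDerivAt_hopfBarrier (x : ℝ) :
    HasDerivAt (hopfBarrier c ε K) (-(ε * (K * exp (K * x)))) x := by
  have hlin : HasDerivAt (fun x => K * x) K x := by simpa using (hasDerivAt_id x).const_mul K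
  unfold hopfBarrier
  simpa [mul_comm] using ((hlin.exp.sub_const 1).const_mul ε).const_sub c

theorem deriv_hopfBarrier : deriv (hopfBarrier c ε K) = fun x => -(ε * (K * exp (K * x))) :=
  funext fun x => (hasDerivAt_hopfBarrier x).deriv

theorem deriv_deriv_hopfBarrier (x : ℝ) :
    deriv (deriv (hopfBarrier c ε K)) x = -(ε * (K * (K * exp (K * x)))) := by
  have hlin : HasDerivAt (fun x => K * x) K x := by simpa using (hasDerivAt_id x).const_mul K
  rw [deriv_hopfBarrier]
  simpa [mul_comm] using ((hlin.exp.const_mul K).const_mul ε).neg.deriv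

theorem contDiff_hopfBarrier {n : WithTop ℕ∞} : ContDiff ℝ n (hopfBarrier c ε K) := by
  unfold hopfBarrier
  fun_prop

theorem antitone_hopfBarrier (hε : 0 ≤ ε) (hK : 0 ≤ K) : Antitone (hopfBarrier c ε K) := by
  intro x y hxy
  have : exp (K * x) ≤ exp (K * y) := exp_le_exp.2 (mul_le_mul_of_nonneg_left hxy hK)
  simp only [hopfBarrier]
  nlinarith

theorem exists_hopfBarrier_eq {r m : ℝ} (hK : 0 < K) (hr : 0 < r) (hm : 0 < m) :
    ∃ ε > 0, hopfBarrier c ε K r = c - m := by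
  have hE : 0 < exp (K * r) - 1 := sub_pos.2 (one_lt_exp_iff.2 (by positivity))
  exact ⟨m / (exp (K * r) - 1), by positivity, by simp [hopfBarrier, div_mul_cancel₀ _ hE.ne']⟩

theorem hopfBarrier_strictSupersolution {lam L A x : ℝ} (hlam : 0 ≤ lam)
    (hφx : 0 ≤ hopfBarrier c ε K x) (hε : 0 < ε) (hK : 0 < K) (hLK : L < K * A) :
    0 < lam * hopfBarrier c ε K x - A * deriv (deriv (hopfBarrier c ε K)) x
      - L * |deriv (hopfBarrier c ε K) x| := by
  have hpos : 0 < ε * (K * exp (K * x)) := by positivity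
  rw [deriv_deriv_hopfBarrier, deriv_hopfBarrier, abs_neg, abs_of_pos hpos]
  nlinarith [mul_nonneg hlam hφx]

end hopfBarrier

theorem hopf_lemma_general (ℓ lam L : ℝ) (hℓ : 0 < ℓ) (hlam : 0 < lam)
    (a : ℝ → ℝ)
    (ha : ∃ σ : ℝ → ℝ, (∃ C : NNReal, LipschitzOnWith C σ (Set.Icc 0 ℓ)) ∧
      ∀ t ∈ Set.Icc (0:ℝ) ℓ, a t = (σ t) ^ 2)
    (ha0 : 0 < a 0)
    (w : ℝ → ℝ) (hw : UpperSemicontinuousOn w (Set.Icc 0 ℓ))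
    (hsub : ∀ φ : ℝ → ℝ, ContDiff ℝ 2 φ → ∀ x₀ ∈ Set.Ioo (0:ℝ) ℓ,
      (∃ δ > 0, ∀ s ∈ Set.Ioo (0:ℝ) ℓ, |s - x₀| < δ →
        w s - φ s ≤ w x₀ - φ x₀) →
      lam * w x₀ - a x₀ * deriv (deriv φ) x₀ - L * |deriv φ x₀| ≤ 0)
    (hmax : ∃ δ > 0, ∀ x : ℝ, 0 < x → x ≤ δ → x ≤ ℓ → w x < w 0)
    (hpos : 0 < w 0)
    (d : ℝ)
    (hder : Filter.Tendsto (fun x => (w x - w 0) / x) (𝓝[>] (0:ℝ)) (𝓝 d)) :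
    0 < -d := by
  obtain ⟨σ, ⟨C, hσ⟩, haσ⟩ := ha
  obtain ⟨δ, hδ, hδmax⟩ := hmax
  obtain ⟨K, hK, hLK⟩ := exists_pos_lt_mul ha0 L
  have ha_cont : ContinuousWithinAt a (Ici 0) 0 :=
    ((hσ.continuousOn.continuousWithinAt (left_mem_Icc.2 hℓ.le)).pow 2
      |>.congr haσ (haσ 0 (left_mem_Icc.2 hℓ.le))).mono_of_mem_nhdsWithin (Icc_mem_nhdsGE hℓ)
  have hnear : ∀ᶠ x in 𝓝[≥] 0, L < K * a x ∧ x < ℓ ∧ x < δ :=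
    ((continuousWithinAt_const.mul ha_cont).eventually (lt_mem_nhds hLK)).and
      (nhdsWithin_le_nhds ((gt_mem_nhds hℓ).and (gt_mem_nhds hδ)))
  obtain ⟨r, hr, hr_near⟩ := mem_nhdsGE_iff_exists_Icc_subset.1 hnear
  obtain ⟨-, hrℓ, hrδ⟩ := hr_near (right_mem_Icc.2 hr.le)
  have hwr : w r < w 0 := hδmax r hr hrδ.le hrℓ.le
  obtain ⟨ε, hε, hφr⟩ := exists_hopfBarrier_eq (c := w 0) hK hr (lt_min hpos (sub_pos.2 hwr))
  set φ := hopfBarrier (w 0) ε K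
  have hφ_nonneg : ∀ x ≤ r, 0 ≤ φ x := fun x hx =>
    calc 0 ≤ φ r := by rw [hφr]; linarith [min_le_left (w 0) (w 0 - w r)]
      _ ≤ φ x := antitone_hopfBarrier hε.le hK.le hx
  have hwφ : ∀ x ∈ Icc 0 r, w x ≤ φ x := by
    refine IsViscositySubsolution.le_of_strictSupersolution hsub hlam.le le_rfl hrℓ.le
      (hw.mono (Icc_subset_Icc_right hrℓ.le)) contDiff_hopfBarrier
      (fun x hx => hopfBarrier_strictSupersolution hlam.le (hφ_nonneg x hx.2.le) hε hK
        (hr_near (Ioo_subset_Icc_self hx)).1) (by simp [φ]) ?_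
    rw [hφr]
    linarith [min_le_right (w 0) (w 0 - w r)]
  have hd : d ≤ -(ε * K) :=
    le_of_tendsto_slope_of_eventually_le
      (by filter_upwards [Ioc_mem_nhdsGT hr] with x hx using hwφ x ⟨hx.1.le, hx.2⟩) (by simp [φ])
      (by simpa only [sub_zero] using hder)
      (by simpa using (hasDerivAt_hopfBarrier (c := w 0) (ε := ε) (K := K) 0).hasDerivWithinAt)
  linarith [mul_pos hε hK]

/-- Lemma A.3, Hopf lemma for viscosity subsolutions on an
interval.  Let `a = σ²` with `σ` Lipschitz on `[0,ℓ]` and `a(0) > 0`, and let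
`w` be an upper semicontinuous viscosity subsolution of
`λ w − a(x) w'' − L |w'| ≤ 0` on `(0,ℓ)`.  If `w` has a strict local maximum
at `0` with `w(0) > 0` and `w` has a one-sided derivative `d` at `0`, then
`−d > 0`. -/
theorem hopf_lemma (ℓ lam L : ℝ) (hℓ : 0 < ℓ) (hlam : 0 < lam) (hL : 0 < L)
    (a : ℝ → ℝ)
    (ha : ∃ σ : ℝ → ℝ, (∃ C : NNReal, LipschitzOnWith C σ (Set.Icc 0 ℓ)) ∧
      ∀ t ∈ Set.Icc (0:ℝ) ℓ, a t = (σ t) ^ 2)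
    (ha0 : 0 < a 0)
    (w : ℝ → ℝ) (hw : UpperSemicontinuousOn w (Set.Icc 0 ℓ))
    (hsub : ∀ φ : ℝ → ℝ, ContDiff ℝ 2 φ → ∀ x₀ ∈ Set.Ioo (0:ℝ) ℓ,
      (∃ δ > 0, ∀ s ∈ Set.Ioo (0:ℝ) ℓ, |s - x₀| < δ →
        w s - φ s ≤ w x₀ - φ x₀) →
      lam * w x₀ - a x₀ * deriv (deriv φ) x₀ - L * |deriv φ x₀| ≤ 0)
    (hmax : ∃ δ > 0, ∀ x : ℝ, 0 < x → x ≤ δ → x ≤ ℓ → w x < w 0)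
    (hpos : 0 < w 0)
    (d : ℝ)
    (hder : Filter.Tendsto (fun x => (w x - w 0) / x) (𝓝[>] (0:ℝ)) (𝓝 d)) :
    0 < -d :=
  hopf_lemma_general ℓ lam L hℓ hlam a ha ha0 w hw hsub hmax hpos d hder
end

section
/- Explicit barrier construction: assume the steady assumptions and that there exists an index i₀ such that for every r ∈ ℝ and every choice of {p_j}_{j≠i₀}, F(r, p_1,…,p_{i₀},…,p_N) → −∞ as p_{i₀} → +∞. Then there exist constants K₁, K₂ > 0 such that the functions u⁺(x) := K₁ − K₂ρ(x,O) and u⁻(x) := −K₁ + K₂ρ(x,O) satisfy: u⁺ is a viscosity supersolution of problem (P), u⁻ is a viscosity subsolution of problem (P), and u⁻ ≤ u⁺ on all of Γ. -/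
open Set Filter Topology

/-! Both barriers are affine on each edge, with slopes `∓K₂` leaving `O`. At an extremum of
an affine function minus a test function `φ`, `φ'` equals the slope and `φ''` has the sign
that makes the diffusion term harmless, since `a ≥ 0`. The slope `K₂` is chosen so that `F`
has the right sign at `O`: in the direction `i₀` it tends to `-∞` at `+∞` by hypothesis
and to `+∞` at `-∞` by (hyp-kirch), and its monotonicity transfers this sign to every
admissible gradient. The height `K₁` is then chosen so large that `λ K₁` dominates the
Hamiltonians on the edges and the barriers bracket the Dirichlet data at the vertices. -/

section Calculus

variable {f φ : ℝ → ℝ} {a c m t : ℝ}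

/- A negative second derivative would make `a` also a local maximum, so `f` would be
locally constant. -/
theorem IsLocalMin.deriv_deriv_nonneg (h : IsLocalMin f a) (hc : ContinuousAt f a) :
    0 ≤ deriv (deriv f) a := by
  by_contra! hneg
  have hmax := isLocalMax_of_deriv_deriv_neg hneg h.deriv_eq_zero hc
  have hconst : f =ᶠ[𝓝 a] fun _ => f a := (h.and hmax).mono fun y hy => le_antisymm hy.2 hy.1
  rw [hconst.deriv.deriv_eq] at hneg
  simp at hneg

theorem IsLocalMax.deriv_deriv_nonpos (h : IsLocalMax f a) (hc : ContinuousAt f a) :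
    deriv (deriv f) a ≤ 0 := by
  have := IsLocalMin.deriv_deriv_nonneg h.neg hc.neg
  simp only [deriv.fun_neg'] at this
  linarith

theorem IsLocalMinOn.hasDerivWithinAt_Ici_nonneg {f' : ℝ} (h : IsLocalMinOn f (Ici a) a)
    (hf : HasDerivWithinAt f f' (Ici a) a) : 0 ≤ f' := by
  have hone : (1 : ℝ) ∈ posTangentConeAt (Ici a) a :=
    mem_posTangentConeAt_of_segment_subset (by simp [segment_eq_Icc, Icc_subset_Ici_self])
  simpa using h.hasFDerivWithinAt_nonneg hf hone

theorem IsLocalMaxOn.hasDerivWithinAt_Ici_nonpos {f' : ℝ} (h : IsLocalMaxOn f (Ici a) a)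
    (hf : HasDerivWithinAt f f' (Ici a) a) : f' ≤ 0 := by
  simpa using IsLocalMinOn.hasDerivWithinAt_Ici_nonneg h.neg hf.neg

theorem hasDerivAt_affine_sub (hφ : DifferentiableAt ℝ φ t) :
    HasDerivAt (fun s => c + m * s - φ s) (m - deriv φ t) t :=
  ((((hasDerivAt_id' t).const_mul m).const_add c).sub hφ.hasDerivAt).congr_deriv (by ring)

theorem deriv_deriv_affine_sub (hφ : Differentiable ℝ φ) :
    deriv (deriv fun s => c + m * s - φ s) t = -deriv (deriv φ) t := by
  have hd : deriv (fun s => c + m * s - φ s) = fun s => m - deriv φ s :=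
    funext fun s => (hasDerivAt_affine_sub (hφ s)).deriv
  rw [hd, deriv_const_sub]

theorem deriv_eq_of_isLocalExtr_affine_sub (hφ : DifferentiableAt ℝ φ t)
    (h : IsLocalExtr (fun s => c + m * s - φ s) t) : deriv φ t = m := by
  have := h.hasDerivAt_eq_zero (hasDerivAt_affine_sub hφ)
  linarith

theorem deriv_deriv_nonpos_of_isLocalMin_affine_sub (hφ : ContDiff ℝ 2 φ)
    (h : IsLocalMin (fun s => c + m * s - φ s) t) : deriv (deriv φ) t ≤ 0 := by
  have hd : Differentiable ℝ φ := hφ.differentiable (by norm_num)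
  have := IsLocalMin.deriv_deriv_nonneg h (hasDerivAt_affine_sub (hd t)).continuousAt
  rw [deriv_deriv_affine_sub hd] at this
  linarith

theorem deriv_deriv_nonneg_of_isLocalMax_affine_sub (hφ : ContDiff ℝ 2 φ)
    (h : IsLocalMax (fun s => c + m * s - φ s) t) : 0 ≤ deriv (deriv φ) t := by
  have hd : Differentiable ℝ φ := hφ.differentiable (by norm_num)
  have := IsLocalMax.deriv_deriv_nonpos h (hasDerivAt_affine_sub (hd t)).continuousAt
  rw [deriv_deriv_affine_sub hd] at this
  linarith

theorem exists_pos_le_zero_le_neg {f : ℝ → ℝ} (htop : Tendsto f atTop atBot)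
    (hbot : Tendsto f atBot atTop) : ∃ K > 0, f K ≤ 0 ∧ 0 ≤ f (-K) :=
  ((eventually_gt_atTop 0).and <| (htop.eventually (eventually_le_atBot 0)).and
    ((hbot.comp tendsto_neg_atTop_atBot).eventually (eventually_ge_atTop 0))).exists

end Calculus

namespace Paper

variable {N : ℕ}

section Localization

variable {D : Data N} {w : Fin N → ℝ → ℝ} {i : Fin N} {t : ℝ}

theorem LocalMinEdge.isLocalMin (h : LocalMinEdge D w i t) (ht : t ∈ Ioo 0 (D.ℓ i)) :
    IsLocalMin (w i) t := by
  obtain ⟨δ, hδ, hmin⟩ := h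
  filter_upwards [Icc_mem_nhds ht.1 ht.2, eventually_abs_sub_lt t hδ] with s hs hsδ
  exact hmin s hs hsδ

theorem LocalMaxEdge.isLocalMax (h : LocalMaxEdge D w i t) (ht : t ∈ Ioo 0 (D.ℓ i)) :
    IsLocalMax (w i) t := by
  obtain ⟨δ, hδ, hmax⟩ := h
  filter_upwards [Icc_mem_nhds ht.1 ht.2, eventually_abs_sub_lt t hδ] with s hs hsδ
  exact hmax s hs hsδ

theorem LocalMinO.isLocalMinOn (h : LocalMinO D w) (j : Fin N) :
    IsLocalMinOn (w j) (Ici 0) 0 := by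
  obtain ⟨δ, hδ, hmin⟩ := h
  filter_upwards [Ico_mem_nhdsGE (lt_min hδ (D.ℓ_pos j))] with s hs
  exact hmin j s ⟨hs.1, hs.2.le.trans (min_le_right _ _)⟩ (hs.2.trans_le (min_le_left _ _))

theorem LocalMaxO.isLocalMaxOn (h : LocalMaxO D w) (j : Fin N) :
    IsLocalMaxOn (w j) (Ici 0) 0 := by
  obtain ⟨δ, hδ, hmax⟩ := h
  filter_upwards [Ico_mem_nhdsGE (lt_min hδ (D.ℓ_pos j))] with s hs
  exact hmax j s ⟨hs.1, hs.2.le.trans (min_le_right _ _)⟩ (hs.2.trans_le (min_le_left _ _))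

end Localization

section Affine

variable {D : Data N} {c m : ℝ}

theorem isSupersol_affine
    (hedge : ∀ i, ∀ t ∈ Ioo 0 (D.ℓ i), 0 ≤ D.lam * (c + m * t) + D.H i t m)
    (hjunction : ∀ q : Fin N → ℝ, (∀ j, q j ≤ m) → 0 ≤ D.F c q)
    (hvertex : ∀ i, D.h i ≤ c + m * D.ℓ i) :
    IsSupersol D (fun _ t => c + m * t) := by
  refine ⟨fun i => (by fun_prop : Continuous fun t : ℝ => c + m * t).lowerSemicontinuous
    |>.lowerSemicontinuousOn _, fun _ _ => rfl, fun φ ⟨_, hφ⟩ =>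
    ⟨?_, ?_, fun i _ => Or.inr (hvertex i)⟩⟩
  · intro i t ht hmin
    have hloc : IsLocalMin (fun s => c + m * s - φ i s) t := hmin.isLocalMin ht
    have hd := hφ i |>.differentiable (by norm_num) t
    have hX := deriv_deriv_nonpos_of_isLocalMin_affine_sub (hφ i) hloc
    have ha := D.a_nonneg i t (Ioo_subset_Icc_self ht)
    rw [G, deriv_eq_of_isLocalExtr_affine_sub hd (Or.inl hloc)]
    nlinarith [hedge i t ht]
  · refine fun hmin => Or.inr fun _ => ?_
    simpa using hjunction _ fun j => by
      have hd := (hφ j).differentiable (by norm_num) 0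
      have := (hmin.isLocalMinOn j).hasDerivWithinAt_Ici_nonneg
        (hasDerivAt_affine_sub hd).hasDerivWithinAt
      linarith

theorem isSubsol_affine
    (hedge : ∀ i, ∀ t ∈ Ioo 0 (D.ℓ i), D.lam * (c + m * t) + D.H i t m ≤ 0)
    (hjunction : ∀ q : Fin N → ℝ, (∀ j, m ≤ q j) → D.F c q ≤ 0)
    (hvertex : ∀ i, c + m * D.ℓ i ≤ D.h i) :
    IsSubsol D (fun _ t => c + m * t) := by
  refine ⟨fun i => (by fun_prop : Continuous fun t : ℝ => c + m * t).upperSemicontinuous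
    |>.upperSemicontinuousOn _, fun _ _ => rfl, fun φ ⟨_, hφ⟩ =>
    ⟨?_, ?_, fun i _ => Or.inr (hvertex i)⟩⟩
  · intro i t ht hmax
    have hloc : IsLocalMax (fun s => c + m * s - φ i s) t := hmax.isLocalMax ht
    have hd := hφ i |>.differentiable (by norm_num) t
    have hX := deriv_deriv_nonneg_of_isLocalMax_affine_sub (hφ i) hloc
    have ha := D.a_nonneg i t (Ioo_subset_Icc_self ht)
    rw [G, deriv_eq_of_isLocalExtr_affine_sub hd (Or.inr hloc)]
    nlinarith [hedge i t ht]
  · refine fun hmax => Or.inr fun _ => ?_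
    simpa using hjunction _ fun j => by
      have hd := (hφ j).differentiable (by norm_num) 0
      have := (hmax.isLocalMaxOn j).hasDerivWithinAt_Ici_nonpos
        (hasDerivAt_affine_sub hd).hasDerivWithinAt
      linarith

end Affine

theorem Data.exists_bound_H_zero (D : Data N) :
    ∃ M, ∀ i, ∀ t ∈ Icc 0 (D.ℓ i), |D.H i t 0| ≤ M := by
  have hbound : ∀ i, ∀ᶠ M in atTop, ∀ t ∈ Icc 0 (D.ℓ i), |D.H i t 0| ≤ M := fun i => by
    have hcont : ContinuousOn (fun t => D.H i t 0) (Icc 0 (D.ℓ i)) :=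
      (D.H_cont i).comp (continuous_id.prodMk continuous_const).continuousOn
        fun t ht => ⟨ht, mem_univ _⟩
    obtain ⟨M, hM⟩ := isCompact_Icc.exists_bound_of_continuousOn hcont
    filter_upwards [eventually_ge_atTop M] with M' hM' t ht using (hM t ht).trans hM'
  exact (eventually_all.2 hbound).exists

theorem Ham.abs_H_le {D : Data N} {C M : ℝ} {i : Fin N} (hHam : Ham D C i)
    (hM : ∀ t ∈ Icc 0 (D.ℓ i), |D.H i t 0| ≤ M) {t : ℝ} (ht : t ∈ Icc 0 (D.ℓ i)) (p : ℝ) :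
    |D.H i t p| ≤ M + C * |p| := by
  have hlip := hHam.2 t ht p 0
  rw [sub_zero] at hlip
  linarith [abs_sub_abs_le_abs_sub (D.H i t p) (D.H i t 0), hM t ht]

/-- barrier construction in the proof of Theorem 5.1.
Under the steady assumptions, if `F(r,p) → −∞` as `p_{i₀} → +∞` for some
`i₀`, then there are constants `K₁, K₂ > 0` such that
`u⁺(x) = K₁ − K₂ ρ(x,O)` is a viscosity supersolution of (P),
`u⁻(x) = −K₁ + K₂ ρ(x,O)` is a viscosity subsolution of (P) (recall
`ρ(x,O) = x_i` on the edge `E_i`), and `u⁻ ≤ u⁺` on `Γ`. -/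
theorem barrier_construction (N : ℕ) (D : Data N) (C : ℝ)
    (hSteady : Steady D C)
    (hF : ∃ i₀ : Fin N, ∀ (r : ℝ) (p : Fin N → ℝ),
      Filter.Tendsto (fun z : ℝ => D.F r (Function.update p i₀ z))
        Filter.atTop Filter.atBot) :
    ∃ K₁ > 0, ∃ K₂ > 0,
      IsSupersol D (fun _ t => K₁ - K₂ * t) ∧
      IsSubsol D (fun _ t => -K₁ + K₂ * t) ∧
      ∀ i, ∀ t ∈ Set.Icc (0:ℝ) (D.ℓ i), -K₁ + K₂ * t ≤ K₁ - K₂ * t := by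
  obtain ⟨i₀, hF⟩ := hF
  obtain ⟨-, hHam, -, -, hmono, -, hFbot⟩ := hSteady
  obtain ⟨K₂, hK₂, hFK₂, hFnegK₂⟩ := exists_pos_le_zero_le_neg (hF 0 0) (hFbot i₀ 0 0)
  obtain ⟨M, hM⟩ := D.exists_bound_H_zero
  obtain ⟨K₁, hK₁, hK₁ℓ⟩ : ∃ K₁ > 0, ∀ i, |D.h i| + K₂ * D.ℓ i ≤ K₁ ∧
      (M + C * K₂) / D.lam + K₂ * D.ℓ i ≤ K₁ :=
    ((eventually_gt_atTop 0).and (eventually_all.2 fun i =>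
      (eventually_ge_atTop _).and (eventually_ge_atTop _))).exists
  have hdom : ∀ i, ∀ t ∈ Icc 0 (D.ℓ i), ∀ p, |p| = K₂ → |D.H i t p| ≤ D.lam * (K₁ - K₂ * t) :=
    fun i t ht p hp => by
      have hH := (hHam i).abs_H_le (hM i) ht p
      have hlam := (div_le_iff₀' D.lam_pos).1 (by nlinarith [(hK₁ℓ i).2, ht.2] :
        (M + C * K₂) / D.lam ≤ K₁ - K₂ * t)
      rw [hp] at hH
      linarith
  refine ⟨K₁, hK₁, K₂, hK₂, ?_, ?_, fun i t ht => ?_⟩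
  · rw [show (fun (_ : Fin N) t => K₁ - K₂ * t) = fun _ t => K₁ + -K₂ * t by ext; ring]
    refine isSupersol_affine (fun i t ht => ?_) (fun q hq => ?_) (fun i => ?_)
    · linarith [(abs_le.1 (hdom i t (Ioo_subset_Icc_self ht) (-K₂) (by simp [hK₂.le]))).1]
    · exact hFnegK₂.trans (hmono _ _ _ _ hK₁.le
        (le_update_iff.2 ⟨hq i₀, fun j _ => (hq j).trans (by simp [hK₂.le])⟩))
    · linarith [le_abs_self (D.h i), (hK₁ℓ i).1]
  · refine isSubsol_affine (fun i t ht => ?_) (fun q hq => ?_) (fun i => ?_)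
    · linarith [(abs_le.1 (hdom i t (Ioo_subset_Icc_self ht) K₂ (abs_of_pos hK₂))).2]
    · exact (hmono _ _ _ _ (neg_nonpos.2 hK₁.le)
        (update_le_iff.2 ⟨hq i₀, fun j _ => hK₂.le.trans (hq j)⟩)).trans hFK₂
    · linarith [neg_abs_le (D.h i), (hK₁ℓ i).1]
  · nlinarith [abs_nonneg (D.h i), (hK₁ℓ i).1, ht.2]

end Paper
end
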